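/- arXiv:2109.13637 — 11 statements merged into one kernel-verified Lean document; each statement's English description precedes it below -/
import Mathlib

section
/- Let $E$ be a finite-dimensional vector space and $r$ an integer-valued function on subspaces of $E$ satisfying (R1) $0 \le r(A) \le \dim A$, (R2) $A \subseteq B \Rightarrow r(A) \le r(B)$, (R3) $r(A+B)+r(A\cap B) \le r(A)+r(B)$. Suppose $E = E_1 \oplus E_2$ and $r(E_1 + B) = r(E_1) + r(B)$ for all $B \subseteq E_2$ (and symmetrically). Then for all $A \subseteq E_1$ and $B \subseteq E_2$ with $A \cap B = 0$, it holds that $r(A+B) = r(A) + r(B)$. -/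
open Module Submodule

/-!
Submodularity applied to `A` and `B` gives `r (A ⊔ B) ≤ r A + r B`, since `r ⊥ ≥ 0`.
Applied to `A ⊔ B` and `E₁`, whose join is `E₁ ⊔ B` and whose meet contains `A`, it gives
`r E₁ + r B + r A ≤ r (A ⊔ B) + r E₁` by additivity of `r` across `E₁` and monotonicity.
-/

section SubmodularFunction

variable {α : Type*} [Lattice α] (r : α → ℤ)

theorem submodular_sup_le_add_of_inf_eq_bot [OrderBot α] (hbot : 0 ≤ r ⊥)
    (hsub : ∀ a b, r (a ⊔ b) + r (a ⊓ b) ≤ r a + r b) {a b : α} (hab : a ⊓ b = ⊥) :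
    r (a ⊔ b) ≤ r a + r b := by
  have := hsub a b
  rw [hab] at this
  omega

theorem submodular_add_le_sup_of_le (hmono : Monotone r)
    (hsub : ∀ a b, r (a ⊔ b) + r (a ⊓ b) ≤ r a + r b) {a b e : α} (hae : a ≤ e)
    (hadd : r (e ⊔ b) = r e + r b) :
    r a + r b ≤ r (a ⊔ b) := by
  have hsup : (a ⊔ b) ⊔ e = e ⊔ b := by
    rw [sup_comm, ← sup_assoc, sup_eq_left.mpr hae]
  have hinf : r a ≤ r ((a ⊔ b) ⊓ e) := hmono (le_inf le_sup_left hae)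
  have := hsub (a ⊔ b) e
  rw [hsup, hadd] at this
  omega

end SubmodularFunction

theorem direct_sum_rank_additive_general
    {K V : Type*} [Field K] [AddCommGroup V] [Module K V]
    (r : Submodule K V → ℤ)
    (hR1 : ∀ A : Submodule K V, 0 ≤ r A ∧ r A ≤ (finrank K A : ℤ))
    (hR2 : ∀ A B : Submodule K V, A ≤ B → r A ≤ r B)
    (hR3 : ∀ A B : Submodule K V, r (A ⊔ B) + r (A ⊓ B) ≤ r A + r B)
    (E1 E2 : Submodule K V)
    (h1 : ∀ B ≤ E2, r (E1 ⊔ B) = r E1 + r B) :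
    ∀ A ≤ E1, ∀ B ≤ E2, A ⊓ B = ⊥ → r (A ⊔ B) = r A + r B := by
  intro A hA B hB hAB
  exact le_antisymm (submodular_sup_le_add_of_inf_eq_bot r (hR1 ⊥).1 hR3 hAB)
    (submodular_add_le_sup_of_le r (fun _ _ => hR2 _ _) hR3 hA (h1 B hB))

theorem direct_sum_rank_additive
    {K V : Type*} [Field K] [AddCommGroup V] [Module K V] [FiniteDimensional K V]
    (r : Submodule K V → ℤ)
    (hR1 : ∀ A : Submodule K V, 0 ≤ r A ∧ r A ≤ (finrank K A : ℤ))
    (hR2 : ∀ A B : Submodule K V, A ≤ B → r A ≤ r B)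
    (hR3 : ∀ A B : Submodule K V, r (A ⊔ B) + r (A ⊓ B) ≤ r A + r B)
    (E1 E2 : Submodule K V) (hdisj : E1 ⊓ E2 = ⊥) (hsup : E1 ⊔ E2 = ⊤)
    (h1 : ∀ B ≤ E2, r (E1 ⊔ B) = r E1 + r B)
    (h2 : ∀ A ≤ E1, r (E2 ⊔ A) = r E2 + r A) :
    ∀ A ≤ E1, ∀ B ≤ E2, A ⊓ B = ⊥ → r (A ⊔ B) = r A + r B :=
  direct_sum_rank_additive_general r hR1 hR2 hR3 E1 E2 h1
end

section
/- Let $M=(E,r)$ be a $q$-matroid with $E = E_1 \oplus E_2$ such that $r(A+B) = r_1(A) + r_2(B)$ for all $A \subseteq E_1$, $B \subseteq E_2$, where $r_i$ is the restriction of $r$ to subspaces of $E_i$. If neither restriction $M|_{E_1}$ nor $M|_{E_2}$ has a loop (a $1$-dimensional subspace of rank $0$), then $M$ has no loops. -/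
open Module Submodule

/-! If `x = a + b` with `a ∈ E₁`, `b ∈ E₂`, then `⟨a⟩ + ⟨x⟩ = ⟨a⟩ + ⟨b⟩`, so additivity over the
direct sum and subadditivity give `r ⟨a⟩ + r ⟨b⟩ = r (⟨a⟩ + ⟨x⟩) ≤ r ⟨a⟩ + r ⟨x⟩`, i.e.
`r ⟨b⟩ ≤ r ⟨x⟩`. Hence a loop `⟨x⟩` either lies in `E₁`, or dominates the rank of the line
`⟨b⟩ ≤ E₂`, which is then a loop of `M|E₂`. -/

theorem sup_le_add_of_submodular {α : Type*} [Lattice α] {r : α → ℤ}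
    (hnonneg : ∀ a, 0 ≤ r a) (hsub : ∀ a b, r (a ⊔ b) + r (a ⊓ b) ≤ r a + r b) (a b : α) :
    r (a ⊔ b) ≤ r a + r b := by
  linarith [hnonneg (a ⊓ b), hsub a b]

theorem Submodule.exists_eq_span_singleton_of_finrank_eq_one {K V : Type*} [DivisionRing K]
    [AddCommGroup V] [Module K V] {L : Submodule K V} (hL : finrank K L = 1) :
    ∃ x : V, L = K ∙ x := by
  obtain ⟨v, -, hv⟩ := finrank_eq_one_iff'.mp hL
  refine ⟨v, le_antisymm (fun w hw => ?_) ((span_singleton_le_iff_mem _ _).2 v.2)⟩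
  obtain ⟨c, hc⟩ := hv ⟨w, hw⟩
  exact mem_span_singleton.2 ⟨c, congrArg Subtype.val hc⟩

theorem Submodule.span_singleton_sup_span_singleton_add {R M : Type*} [Ring R] [AddCommGroup M]
    [Module R M] (a b : M) : R ∙ a ⊔ R ∙ (a + b) = R ∙ a ⊔ R ∙ b := by
  apply le_antisymm <;> refine sup_le le_sup_left ((span_singleton_le_iff_mem _ _).2 ?_)
  · exact add_mem (mem_sup_left (mem_span_singleton_self a))
      (mem_sup_right (mem_span_singleton_self b))
  · simpa using sub_mem (mem_sup_right (mem_span_singleton_self (a + b)))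
      (mem_sup_left (mem_span_singleton_self a))

theorem le_apply_span_singleton_add_of_apply_sup_eq_add {R M : Type*} [Ring R] [AddCommGroup M]
    [Module R M] {r : Submodule R M → ℤ} (hnonneg : ∀ A, 0 ≤ r A)
    (hsub : ∀ A B, r (A ⊔ B) + r (A ⊓ B) ≤ r A + r B) {a b : M}
    (hab : r (R ∙ a ⊔ R ∙ b) = r (R ∙ a) + r (R ∙ b)) :
    r (R ∙ b) ≤ r (R ∙ (a + b)) := by
  have h := sup_le_add_of_submodular hnonneg hsub (R ∙ a) (R ∙ (a + b))
  rw [span_singleton_sup_span_singleton_add, hab] at h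
  linarith

theorem direct_sum_no_loops_general
    {K V : Type*} [Field K] [AddCommGroup V] [Module K V]
    (r : Submodule K V → ℤ)
    (hR1 : ∀ A : Submodule K V, 0 ≤ r A ∧ r A ≤ (finrank K A : ℤ))
    (hR3 : ∀ A B : Submodule K V, r (A ⊔ B) + r (A ⊓ B) ≤ r A + r B)
    (E1 E2 : Submodule K V) (hsup : E1 ⊔ E2 = ⊤)
    (hsum : ∀ A ≤ E1, ∀ B ≤ E2, r (A ⊔ B) = r A + r B)
    (hl1 : ∀ L ≤ E1, finrank K L = 1 → r L ≠ 0)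
    (hl2 : ∀ L ≤ E2, finrank K L = 1 → r L ≠ 0) :
    ∀ L : Submodule K V, finrank K L = 1 → r L ≠ 0 := by
  intro L hL
  obtain ⟨x, rfl⟩ := exists_eq_span_singleton_of_finrank_eq_one hL
  obtain ⟨a, ha, b, hb, rfl⟩ := mem_sup.mp (hsup ▸ mem_top : x ∈ E1 ⊔ E2)
  have haE1 := (span_singleton_le_iff_mem a E1).2 ha
  have hbE2 := (span_singleton_le_iff_mem b E2).2 hb
  rcases eq_or_ne b 0 with rfl | hb0
  · rw [add_zero] at hL ⊢
    exact hl1 _ haE1 hL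
  · have hle := le_apply_span_singleton_add_of_apply_sup_eq_add (fun A => (hR1 A).1) hR3
      (hsum _ haE1 _ hbE2)
    have hb_ne := hl2 _ hbE2 (finrank_span_singleton hb0)
    have hb_nonneg := (hR1 (K ∙ b)).1
    omega

theorem direct_sum_no_loops
    {K V : Type*} [Field K] [AddCommGroup V] [Module K V] [FiniteDimensional K V]
    (r : Submodule K V → ℤ)
    (hR1 : ∀ A : Submodule K V, 0 ≤ r A ∧ r A ≤ (finrank K A : ℤ))
    (hR2 : ∀ A B : Submodule K V, A ≤ B → r A ≤ r B)
    (hR3 : ∀ A B : Submodule K V, r (A ⊔ B) + r (A ⊓ B) ≤ r A + r B)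
    (E1 E2 : Submodule K V) (hdisj : E1 ⊓ E2 = ⊥) (hsup : E1 ⊔ E2 = ⊤)
    (hsum : ∀ A ≤ E1, ∀ B ≤ E2, r (A ⊔ B) = r A + r B)
    (hl1 : ∀ L ≤ E1, finrank K L = 1 → r L ≠ 0)
    (hl2 : ∀ L ≤ E2, finrank K L = 1 → r L ≠ 0) :
    ∀ L : Submodule K V, finrank K L = 1 → r L ≠ 0 :=
  direct_sum_no_loops_general r hR1 hR3 E1 E2 hsup hsum hl1 hl2
end

section
/- Let $f$ be a non-negative integer-valued increasing submodular function on the subspaces of a finite-dimensional vector space $E$ with $f(0)=0$. Then $r(A) = \min_{X \subseteq E} \{ f(X) + \dim A - \dim(A \cap X) \}$ satisfies the $q$-matroid rank axioms: (R1) $0 \le r(A) \le \dim A$; (R2) $A \subseteq B$ implies $r(A) \le r(B)$; (R3) $r(A+B) + r(A \cap B) \le r(A) + r(B)$. -/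
/-!
For (R1), the competitor `X = 0` gives `r A ≤ dim A`, while `f ≥ 0` and `dim (A ∩ X) ≤ dim A`
give `r A ≥ 0`. For (R2), a minimiser `X` for `B` is a competitor for `A ⊆ B`, since
`dim A - dim (A ∩ X) ≤ dim B - dim (B ∩ X)` by the modular law. For (R3), take minimisers `X`,
`Y` for `A`, `B` and use `X + Y` for `A + B` and `X ∩ Y` for `A ∩ B`: submodularity of `f`
bounds the `f`-terms, and Grassmann's formula for `A ∩ X` and `B ∩ Y`, whose sum lies in
`(A + B) ∩ (X + Y)` and whose intersection lies in `(A ∩ B) ∩ (X ∩ Y)`, bounds the dimension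
terms.
-/

open Module Submodule

section

variable {K V : Type*} [DivisionRing K] [AddCommGroup V] [Module K V]

theorem finrank_add_finrank_inf_le_of_le [FiniteDimensional K V] {A B : Submodule K V}
    (hAB : A ≤ B) (X : Submodule K V) :
    finrank K A + finrank K ↥(B ⊓ X) ≤ finrank K B + finrank K ↥(A ⊓ X) := by
  have hmodular := finrank_sup_add_finrank_inf_eq A (B ⊓ X)
  rw [← inf_assoc, inf_eq_left.mpr hAB] at hmodular
  have hsup := Submodule.finrank_mono (sup_le hAB inf_le_left : A ⊔ B ⊓ X ≤ B)
  omega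

theorem finrank_inf_add_finrank_inf_le [FiniteDimensional K V] (A B X Y : Submodule K V) :
    finrank K ↥(A ⊓ X) + finrank K ↥(B ⊓ Y) ≤
      finrank K ↥((A ⊔ B) ⊓ (X ⊔ Y)) + finrank K ↥(A ⊓ B ⊓ (X ⊓ Y)) := by
  rw [← finrank_sup_add_finrank_inf_eq]
  exact add_le_add
    (Submodule.finrank_mono (sup_le (inf_le_inf le_sup_left le_sup_left)
      (inf_le_inf le_sup_right le_sup_right)))
    (Submodule.finrank_mono (inf_inf_inf_comm A X B Y).le)

variable (K) in
def IsInducedRank (f r : Submodule K V → ℤ) : Prop :=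
  ∀ A : Submodule K V, IsLeast
    {y : ℤ | ∃ X : Submodule K V,
      y = f X + (finrank K A : ℤ) - (finrank K ↥(A ⊓ X) : ℤ)} (r A)

namespace IsInducedRank

variable {f r : Submodule K V → ℤ}

theorem le (hr : IsInducedRank K f r) (A X : Submodule K V) :
    r A ≤ f X + (finrank K A : ℤ) - (finrank K ↥(A ⊓ X) : ℤ) :=
  (hr A).2 ⟨X, rfl⟩

theorem exists_eq (hr : IsInducedRank K f r) (A : Submodule K V) :
    ∃ X : Submodule K V, r A = f X + (finrank K A : ℤ) - (finrank K ↥(A ⊓ X) : ℤ) :=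
  (hr A).1

theorem nonneg [FiniteDimensional K V] (hr : IsInducedRank K f r) (hf0 : ∀ X, 0 ≤ f X)
    (A : Submodule K V) : 0 ≤ r A := by
  obtain ⟨X, hX⟩ := hr.exists_eq A
  have hfX := hf0 X
  have hinf := Submodule.finrank_mono (inf_le_left : A ⊓ X ≤ A)
  omega

theorem le_finrank (hr : IsInducedRank K f r) (hbot : f ⊥ = 0) (A : Submodule K V) :
    r A ≤ finrank K A := by
  have h := hr.le A ⊥
  rwa [hbot, inf_bot_eq, finrank_bot, Nat.cast_zero, zero_add, sub_zero] at h

theorem mono [FiniteDimensional K V] (hr : IsInducedRank K f r) {A B : Submodule K V}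
    (hAB : A ≤ B) : r A ≤ r B := by
  obtain ⟨X, hX⟩ := hr.exists_eq B
  have hA := hr.le A X
  have hdim := finrank_add_finrank_inf_le_of_le hAB X
  omega

theorem sup_add_inf_le [FiniteDimensional K V] (hr : IsInducedRank K f r)
    (hsub : ∀ X Y, f (X ⊔ Y) + f (X ⊓ Y) ≤ f X + f Y) (A B : Submodule K V) :
    r (A ⊔ B) + r (A ⊓ B) ≤ r A + r B := by
  obtain ⟨X, hX⟩ := hr.exists_eq A
  obtain ⟨Y, hY⟩ := hr.exists_eq B
  have hsup := hr.le (A ⊔ B) (X ⊔ Y)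
  have hinf := hr.le (A ⊓ B) (X ⊓ Y)
  have hf := hsub X Y
  have hAB := finrank_sup_add_finrank_inf_eq A B
  have hdim := finrank_inf_add_finrank_inf_le A B X Y
  omega

end IsInducedRank

end

theorem rank_from_submodular_function_general
    {K V : Type*} [Field K] [AddCommGroup V] [Module K V] [FiniteDimensional K V]
    (f : Submodule K V → ℤ)
    (hf0 : ∀ A : Submodule K V, 0 ≤ f A)
    (hsub : ∀ A B : Submodule K V, f (A ⊔ B) + f (A ⊓ B) ≤ f A + f B)
    (hbot : f ⊥ = 0)
    (r : Submodule K V → ℤ)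
    (hr : ∀ A : Submodule K V, IsLeast
      {y : ℤ | ∃ X : Submodule K V,
        y = f X + (finrank K A : ℤ) - (finrank K ↥(A ⊓ X) : ℤ)} (r A)) :
    (∀ A : Submodule K V, 0 ≤ r A ∧ r A ≤ (finrank K A : ℤ)) ∧
    (∀ A B : Submodule K V, A ≤ B → r A ≤ r B) ∧
    (∀ A B : Submodule K V, r (A ⊔ B) + r (A ⊓ B) ≤ r A + r B) := by
  have hr : IsInducedRank K f r := hr
  exact ⟨fun A => ⟨hr.nonneg hf0 A, hr.le_finrank hbot A⟩, fun _ _ => hr.mono,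
    hr.sup_add_inf_le hsub⟩

theorem rank_from_submodular_function
    {K V : Type*} [Field K] [AddCommGroup V] [Module K V] [FiniteDimensional K V]
    (f : Submodule K V → ℤ)
    (hf0 : ∀ A : Submodule K V, 0 ≤ f A)
    (hmono : ∀ A B : Submodule K V, A ≤ B → f A ≤ f B)
    (hsub : ∀ A B : Submodule K V, f (A ⊔ B) + f (A ⊓ B) ≤ f A + f B)
    (hbot : f ⊥ = 0)
    (r : Submodule K V → ℤ)
    (hr : ∀ A : Submodule K V, IsLeast
      {y : ℤ | ∃ X : Submodule K V,
        y = f X + (finrank K A : ℤ) - (finrank K ↥(A ⊓ X) : ℤ)} (r A)) :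
    (∀ A : Submodule K V, 0 ≤ r A ∧ r A ≤ (finrank K A : ℤ)) ∧
    (∀ A B : Submodule K V, A ≤ B → r A ≤ r B) ∧
    (∀ A B : Submodule K V, r (A ⊔ B) + r (A ⊓ B) ≤ r A + r B) :=
  rank_from_submodular_function_general f hf0 hsub hbot r hr
end

section
/- Let $f$ be a non-negative integer-valued increasing submodular function on subspaces of $E$ with $f(0)=0$, and define $r(A) = \min_{X \subseteq E} \{ f(X) + \dim A - \dim(A \cap X) \}$. Then for any subspace $A$, the minimum is already attained among subspaces of $A$: $r(A) = \min_{X' \subseteq A} \{ f(X') + \dim A - \dim X' \}$. -/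
open Module Submodule

/- Replacing a minimiser `X` by `A ⊓ X` leaves `A ⊓ X` unchanged and does not increase `f`, so some
minimiser lies inside `A`; conversely, for `X ≤ A` the two expressions agree. -/
theorem rank_min_attained_inside_general
    {K V : Type*} [Field K] [AddCommGroup V] [Module K V]
    (f : Submodule K V → ℤ)
    (hmono : ∀ A B : Submodule K V, A ≤ B → f A ≤ f B)
    (r : Submodule K V → ℤ)
    (hr : ∀ A : Submodule K V, IsLeast
      {y : ℤ | ∃ X : Submodule K V,
        y = f X + (finrank K A : ℤ) - (finrank K ↥(A ⊓ X) : ℤ)} (r A)) :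
    ∀ A : Submodule K V, IsLeast
      {y : ℤ | ∃ X ≤ A, y = f X + (finrank K A : ℤ) - (finrank K X : ℤ)} (r A) := by
  intro A
  obtain ⟨⟨X, hX⟩, hmin⟩ := hr A
  refine ⟨⟨A ⊓ X, inf_le_left, le_antisymm ?_ ?_⟩, ?_⟩
  · exact hmin ⟨A ⊓ X, by rw [inf_left_idem]⟩
  · rw [hX]
    linarith [hmono _ _ (inf_le_right : A ⊓ X ≤ X)]
  · rintro y ⟨X', hX'A, rfl⟩
    exact hmin ⟨X', by rw [inf_eq_right.mpr hX'A]⟩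

theorem rank_min_attained_inside
    {K V : Type*} [Field K] [AddCommGroup V] [Module K V] [FiniteDimensional K V]
    (f : Submodule K V → ℤ)
    (hf0 : ∀ A : Submodule K V, 0 ≤ f A)
    (hmono : ∀ A B : Submodule K V, A ≤ B → f A ≤ f B)
    (hsub : ∀ A B : Submodule K V, f (A ⊔ B) + f (A ⊓ B) ≤ f A + f B)
    (hbot : f ⊥ = 0)
    (r : Submodule K V → ℤ)
    (hr : ∀ A : Submodule K V, IsLeast
      {y : ℤ | ∃ X : Submodule K V,
        y = f X + (finrank K A : ℤ) - (finrank K ↥(A ⊓ X) : ℤ)} (r A)) :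
    ∀ A : Submodule K V, IsLeast
      {y : ℤ | ∃ X ≤ A, y = f X + (finrank K A : ℤ) - (finrank K X : ℤ)} (r A) :=
  rank_min_attained_inside_general f hmono r hr
end

section
/- Let $f$ be a non-negative integer-valued increasing submodular function on subspaces of $E$ with $f(0)=0$, and $r(A) = \min_{X' \subseteq A}\{f(X') + \dim A - \dim X'\}$. Then for a subspace $I \subseteq E$: $r(I) = \dim I$ if and only if $\dim I' \le f(I')$ for every subspace $I' \subseteq I$. -/
open Module Submodule

theorem independent_iff_dim_le_f_general
    {K V : Type*} [Field K] [AddCommGroup V] [Module K V]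
    (f : Submodule K V → ℤ)
    (hbot : f ⊥ = 0)
    (r : Submodule K V → ℤ)
    (hr : ∀ A : Submodule K V, IsLeast
      {y : ℤ | ∃ X ≤ A, y = f X + (finrank K A : ℤ) - (finrank K X : ℤ)} (r A)) :
    ∀ I : Submodule K V,
      r I = (finrank K I : ℤ) ↔ ∀ I' ≤ I, (finrank K I' : ℤ) ≤ f I' := by
  intro I
  obtain ⟨⟨X, hXI, hrX⟩, hlb⟩ := hr I
  constructor
  · intro hrI I' hI'
    have := hlb ⟨I', hI', rfl⟩
    omega
  · intro h
    have hle : r I ≤ f ⊥ + finrank K I - finrank K (⊥ : Submodule K V) := hlb ⟨⊥, bot_le, rfl⟩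
    rw [hbot, finrank_bot, Nat.cast_zero] at hle
    have := h X hXI
    omega

theorem independent_iff_dim_le_f
    {K V : Type*} [Field K] [AddCommGroup V] [Module K V] [FiniteDimensional K V]
    (f : Submodule K V → ℤ)
    (hf0 : ∀ A : Submodule K V, 0 ≤ f A)
    (hmono : ∀ A B : Submodule K V, A ≤ B → f A ≤ f B)
    (hsub : ∀ A B : Submodule K V, f (A ⊔ B) + f (A ⊓ B) ≤ f A + f B)
    (hbot : f ⊥ = 0)
    (r : Submodule K V → ℤ)
    (hr : ∀ A : Submodule K V, IsLeast
      {y : ℤ | ∃ X ≤ A, y = f X + (finrank K A : ℤ) - (finrank K X : ℤ)} (r A)) :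
    ∀ I : Submodule K V,
      r I = (finrank K I : ℤ) ↔ ∀ I' ≤ I, (finrank K I' : ℤ) ≤ f I' :=
  independent_iff_dim_le_f_general f hbot r hr
end

section
/- Let $M_1=(E,r_1)$ and $M_2=(E,r_2)$ be $q$-matroids on the same ground space $E$. Then the function $r(A) = \min_{X \subseteq A}\{ r_1(X) + r_2(X) + \dim A - \dim X \}$ is the rank function of a $q$-matroid (the matroid union $M_1 \vee M_2$), i.e., $r$ satisfies (R1), (R2), (R3). -/
/-!
Put `f = r₁ + r₂`; it is nonnegative, monotone and submodular, and `r` is the rank function induced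
by `f`. If `X ≤ A` and `Y ≤ B` attain `r A` and `r B`, then `X ⊔ Y ≤ A ⊔ B` and `X ⊓ Y ≤ A ⊓ B` are
admissible for `r (A ⊔ B)` and `r (A ⊓ B)`, and submodularity of `f` together with modularity of
`dim` gives (R3). For (R2), a minimiser `X` for `B` gives the admissible `X ⊓ A` for `A`, and
`dim A - dim (X ⊓ A) = dim (X ⊔ A) - dim X ≤ dim B - dim X`.
-/

open Module Submodule

namespace Submodule

variable {K V : Type*} [Field K] [AddCommGroup V] [Module K V]

def IsInducedRank (f r : Submodule K V → ℤ) : Prop :=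
  ∀ A, IsLeast {y | ∃ X ≤ A, y = f X + (finrank K A : ℤ) - (finrank K X : ℤ)} (r A)

namespace IsInducedRank

variable {f r : Submodule K V → ℤ}

theorem le (hr : IsInducedRank f r) {A X : Submodule K V} (hXA : X ≤ A) :
    r A ≤ f X + (finrank K A : ℤ) - (finrank K X : ℤ) :=
  (hr A).2 ⟨X, hXA, rfl⟩

theorem le_finrank (hr : IsInducedRank f r) (hf : f ⊥ ≤ 0) (A : Submodule K V) :
    r A ≤ finrank K A := by
  have := hr.le (bot_le : ⊥ ≤ A)
  rw [finrank_bot, Nat.cast_zero] at this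
  linarith

variable [FiniteDimensional K V]

theorem nonneg (hr : IsInducedRank f r) (hf : ∀ X, 0 ≤ f X) (A : Submodule K V) : 0 ≤ r A := by
  obtain ⟨X, hXA, hX⟩ := (hr A).1
  have : (finrank K X : ℤ) ≤ finrank K A := by exact_mod_cast finrank_mono hXA
  linarith [hf X]

theorem monotone (hr : IsInducedRank f r) (hf : Monotone f) : Monotone r := by
  intro A B hAB
  obtain ⟨X, hXB, hX⟩ := (hr B).1
  have hdim : (finrank K ↥(X ⊔ A) : ℤ) + finrank K ↥(X ⊓ A) = finrank K X + finrank K A := by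
    exact_mod_cast finrank_sup_add_finrank_inf_eq X A
  have hXA : (finrank K ↥(X ⊔ A) : ℤ) ≤ finrank K B := by
    exact_mod_cast finrank_mono (sup_le hXB hAB)
  linarith [hr.le (inf_le_right : X ⊓ A ≤ A), hf (inf_le_left : X ⊓ A ≤ X)]

theorem submodular (hr : IsInducedRank f r) (hf : ∀ X Y, f (X ⊔ Y) + f (X ⊓ Y) ≤ f X + f Y)
    (A B : Submodule K V) : r (A ⊔ B) + r (A ⊓ B) ≤ r A + r B := by
  obtain ⟨X, hXA, hX⟩ := (hr A).1
  obtain ⟨Y, hYB, hY⟩ := (hr B).1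
  have hdimXY := finrank_sup_add_finrank_inf_eq X Y
  have hdimAB := finrank_sup_add_finrank_inf_eq A B
  zify at hdimXY hdimAB
  linarith [hr.le (sup_le_sup hXA hYB), hr.le (inf_le_inf hXA hYB), hf X Y]

end IsInducedRank

end Submodule

theorem matroid_union_is_qmatroid
    {K V : Type*} [Field K] [AddCommGroup V] [Module K V] [FiniteDimensional K V]
    (r1 r2 : Submodule K V → ℤ)
    (hR1₁ : ∀ A : Submodule K V, 0 ≤ r1 A ∧ r1 A ≤ (finrank K A : ℤ))
    (hR2₁ : ∀ A B : Submodule K V, A ≤ B → r1 A ≤ r1 B)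
    (hR3₁ : ∀ A B : Submodule K V, r1 (A ⊔ B) + r1 (A ⊓ B) ≤ r1 A + r1 B)
    (hR1₂ : ∀ A : Submodule K V, 0 ≤ r2 A ∧ r2 A ≤ (finrank K A : ℤ))
    (hR2₂ : ∀ A B : Submodule K V, A ≤ B → r2 A ≤ r2 B)
    (hR3₂ : ∀ A B : Submodule K V, r2 (A ⊔ B) + r2 (A ⊓ B) ≤ r2 A + r2 B)
    (r : Submodule K V → ℤ)
    (hr : ∀ A : Submodule K V, IsLeast
      {y : ℤ | ∃ X ≤ A, y = r1 X + r2 X + (finrank K A : ℤ) - (finrank K X : ℤ)} (r A)) :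
    (∀ A : Submodule K V, 0 ≤ r A ∧ r A ≤ (finrank K A : ℤ)) ∧
    (∀ A B : Submodule K V, A ≤ B → r A ≤ r B) ∧
    (∀ A B : Submodule K V, r (A ⊔ B) + r (A ⊓ B) ≤ r A + r B) := by
  have hr' : IsInducedRank (fun X => r1 X + r2 X) r := hr
  have hnonneg : ∀ X, 0 ≤ r1 X + r2 X := fun X => add_nonneg (hR1₁ X).1 (hR1₂ X).1
  have hbot : r1 ⊥ + r2 ⊥ ≤ 0 := by
    have h₁ := (hR1₁ ⊥).2
    have h₂ := (hR1₂ ⊥).2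
    rw [finrank_bot, Nat.cast_zero] at h₁ h₂
    linarith
  have hmono : Monotone fun X => r1 X + r2 X :=
    Monotone.add (fun A B => hR2₁ A B) (fun A B => hR2₂ A B)
  have hsubmod : ∀ X Y, r1 (X ⊔ Y) + r2 (X ⊔ Y) + (r1 (X ⊓ Y) + r2 (X ⊓ Y)) ≤
      r1 X + r2 X + (r1 Y + r2 Y) := fun X Y => by linarith [hR3₁ X Y, hR3₂ X Y]
  exact ⟨fun A => ⟨hr'.nonneg hnonneg A, hr'.le_finrank hbot A⟩,
    fun _ _ h => hr'.monotone hmono h, hr'.submodular hsubmod⟩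
end

section
/- Let $M_1=(E,r_1)$ and $M_2=(E,r_2)$ be $q$-matroids on the same ground space. A subspace $I$ is independent in the matroid union $M_1 \vee M_2$ if and only if every subspace $J \subseteq I$ can be written as $J = I_1 \oplus I_2$ with $I_1$ independent in $M_1$ and $I_2$ independent in $M_2$. -/
/-!
The forward direction is the q-analogue of the matroid union theorem: if
`dim X ≤ r₁ X + r₂ X` for every `X ≤ J`, then `J = I₁ + I₂` with `Iᵢ` independent in `Mᵢ`.
Induct on `dim J`. If some proper nonzero `T ≤ J` is tight (`r₁ T + r₂ T = dim T`), split `T`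
by induction and split a complement of `T` in the contractions `M₁ / T`, `M₂ / T`; tightness
forces the pieces of `T` to span `T` in each `Mᵢ`, and then the pieces glue. Otherwise choose a
line `x ≤ J` with `r₁ x = 1`; the strict inequality on proper subspaces survives contracting `x`
in `M₁`, so a complement of `x` splits in `M₁ / x` and `M₂`. Since independence is hereditary,
the sum can be made direct by shrinking `I₂`.

Conversely, if `X ≤ I` attains the minimum in the union rank formula and `X = I₁ ⊕ I₂`, then
`r₁ X + r₂ X ≥ dim I₁ + dim I₂ = dim X`, so the minimum is `dim I`.
-/

open Module Submodule

theorem exists_lt_disjoint_and_sup_eq {α : Type*} [Lattice α] [BoundedOrder α]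
    [IsModularLattice α] [ComplementedLattice α] {a b : α} (ha : a ≠ ⊥) (hab : a ≤ b) :
    ∃ c, c < b ∧ Disjoint a c ∧ a ⊔ c = b := by
  obtain ⟨c, hac, rfl⟩ := IsModularLattice.exists_disjoint_and_sup_eq hab
  refine ⟨c, lt_of_le_of_ne le_sup_right fun h => ha ?_, hac, rfl⟩
  exact hac.eq_bot_of_le (h ▸ le_sup_left)

section QMatroid

variable {K V : Type*} [Field K] [AddCommGroup V] [Module K V]

structure IsQMatroidRank (r : Submodule K V → ℤ) : Prop where
  nonneg : ∀ A, 0 ≤ r A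
  le_finrank : ∀ A, r A ≤ finrank K A
  mono : ∀ A B, A ≤ B → r A ≤ r B
  submodular : ∀ A B, r (A ⊔ B) + r (A ⊓ B) ≤ r A + r B

/-- The rank function of the contraction `M / W`, pulled back to subspaces of `V` by `X ↦ X + W`. -/
def contractRank (r : Submodule K V → ℤ) (W X : Submodule K V) : ℤ :=
  r (X ⊔ W) - r W

def IsSumOfIndep (r₁ r₂ : Submodule K V → ℤ) (J : Submodule K V) : Prop :=
  ∃ I₁ I₂ : Submodule K V, I₁ ⊔ I₂ = J ∧ r₁ I₁ = finrank K I₁ ∧ r₂ I₂ = finrank K I₂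

namespace IsQMatroidRank

variable {r : Submodule K V → ℤ}

theorem map_bot (hr : IsQMatroidRank r) : r ⊥ = 0 :=
  le_antisymm (by simpa using hr.le_finrank ⊥) (hr.nonneg ⊥)

theorem sup_le_add (hr : IsQMatroidRank r) (A B : Submodule K V) : r (A ⊔ B) ≤ r A + r B := by
  linarith [hr.submodular A B, hr.nonneg (A ⊓ B)]

theorem rank_span_singleton_le_one (hr : IsQMatroidRank r) (v : V) : r (K ∙ v) ≤ 1 :=
  (hr.le_finrank _).trans (mod_cast (finrank_span_le_card ({v} : Set V)).trans (by simp))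

theorem contract (hr : IsQMatroidRank r) (W : Submodule K V) :
    IsQMatroidRank (contractRank r W) where
  nonneg A := sub_nonneg.2 (hr.mono _ _ le_sup_right)
  le_finrank A := by
    unfold contractRank
    linarith [hr.submodular A W, hr.nonneg (A ⊓ W), hr.le_finrank A]
  mono A B hAB := sub_le_sub_right (hr.mono _ _ (sup_le_sup_right hAB W)) _
  submodular A B := by
    have h := hr.submodular (A ⊔ W) (B ⊔ W)
    rw [sup_sup_sup_comm, sup_idem] at h
    have := hr.mono ((A ⊓ B) ⊔ W) ((A ⊔ W) ⊓ (B ⊔ W))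
      (le_inf (sup_le_sup_right inf_le_left W) (sup_le_sup_right inf_le_right W))
    unfold contractRank
    linarith

variable [FiniteDimensional K V]

theorem le_add_finrank_sub (hr : IsQMatroidRank r) {A B : Submodule K V} (hBA : B ≤ A) :
    r A ≤ r B + finrank K A - finrank K B := by
  obtain ⟨C, hBC, rfl⟩ := IsModularLattice.exists_disjoint_and_sup_eq hBA
  have hdim := finrank_sup_add_finrank_inf_eq B C
  rw [hBC.eq_bot, finrank_bot] at hdim
  have := hr.sup_le_add B C
  have := hr.le_finrank C
  omega

theorem eq_finrank_of_le (hr : IsQMatroidRank r) {A B : Submodule K V}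
    (hA : r A = finrank K A) (hBA : B ≤ A) : r B = finrank K B :=
  le_antisymm (hr.le_finrank B) (by linarith [hr.le_add_finrank_sub hBA])

theorem rank_le_zero_of_forall_span_singleton (hr : IsQMatroidRank r) {J : Submodule K V}
    (h : ∀ v ∈ J, r (K ∙ v) ≤ 0) : r J ≤ 0 := by
  classical
  obtain ⟨s, rfl⟩ := IsNoetherian.noetherian J
  induction s using Finset.induction_on with
  | empty => simp [hr.map_bot]
  | insert a s _ ih =>
    rw [Finset.coe_insert, span_insert] at h ⊢
    linarith [hr.sup_le_add (K ∙ a) (span K s), h a (mem_sup_left (mem_span_singleton_self a)),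
      ih fun v hv => h v (mem_sup_right hv)]

theorem exists_rank_span_singleton_eq_one (hr : IsQMatroidRank r) {J : Submodule K V}
    (hJ : 0 < r J) : ∃ v ∈ J, v ≠ 0 ∧ r (K ∙ v) = 1 := by
  by_contra! h
  refine hJ.not_ge (hr.rank_le_zero_of_forall_span_singleton fun v hv => ?_)
  rcases eq_or_ne v 0 with rfl | hv0
  · simp [hr.map_bot]
  · have := hr.rank_span_singleton_le_one v
    have := h v hv hv0
    omega

/-- Independent subspaces glue along a contraction; `r A = r T` says that `A` spans `T`. -/
theorem eq_finrank_sup_of_contract (hr : IsQMatroidRank r) {A T B : Submodule K V}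
    (hAT : A ≤ T) (hA : r A = finrank K A) (hspan : r A = r T)
    (hB : contractRank r T B = finrank K B) : r (A ⊔ B) = finrank K ↥(A ⊔ B) := by
  have h := hr.submodular (A ⊔ B) T
  rw [sup_right_comm, sup_eq_right.2 hAT, sup_comm] at h
  have := hr.mono A ((A ⊔ B) ⊓ T) (le_inf le_sup_left hAT)
  have := finrank_add_le_finrank_add_finrank A B
  have := hr.le_finrank (A ⊔ B)
  unfold contractRank at hB
  omega

end IsQMatroidRank

variable {r₁ r₂ : Submodule K V → ℤ}

theorem finrank_le_contract_of_tight [FiniteDimensional K V] {T H J : Submodule K V}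
    (hJ : ∀ X ≤ J, (finrank K X : ℤ) ≤ r₁ X + r₂ X) (hT : r₁ T + r₂ T = finrank K T)
    (hTH : Disjoint T H) (hTHJ : T ⊔ H = J) :
    ∀ X ≤ H, (finrank K X : ℤ) ≤ contractRank r₁ T X + contractRank r₂ T X := by
  intro X hX
  have hdim := finrank_sup_add_finrank_inf_eq X T
  rw [(hTH.symm.mono_left hX).eq_bot, finrank_bot] at hdim
  have := hJ (X ⊔ T) (hTHJ ▸ sup_comm T H ▸ sup_le_sup_right hX T)
  unfold contractRank
  omega

theorem finrank_le_contract_left (h₁ : IsQMatroidRank r₁) (h₂ : IsQMatroidRank r₂)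
    {x H J : Submodule K V}
    (hJ : ∀ X ≤ J, X ≠ ⊥ → X ≠ J → (finrank K X : ℤ) < r₁ X + r₂ X)
    (hx : r₁ x = 1) (hHJ : H < J) :
    ∀ X ≤ H, (finrank K X : ℤ) ≤ contractRank r₁ x X + r₂ X := by
  intro X hX
  rcases eq_or_ne X ⊥ with rfl | hX0
  · simpa using add_nonneg ((h₁.contract x).nonneg ⊥) (h₂.nonneg ⊥)
  · have := hJ X (hX.trans hHJ.le) hX0 (hX.trans_lt hHJ).ne
    have := h₁.mono X (X ⊔ x) le_sup_left
    unfold contractRank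
    omega

theorem IsSumOfIndep.of_tight [FiniteDimensional K V] (h₁ : IsQMatroidRank r₁)
    (h₂ : IsQMatroidRank r₂) {T H J : Submodule K V} (hT : r₁ T + r₂ T = finrank K T)
    (hTdec : IsSumOfIndep r₁ r₂ T) (hTHJ : T ⊔ H = J)
    (hHdec : IsSumOfIndep (contractRank r₁ T) (contractRank r₂ T) H) :
    IsSumOfIndep r₁ r₂ J := by
  obtain ⟨A₁, A₂, rfl, hA₁, hA₂⟩ := hTdec
  obtain ⟨B₁, B₂, rfl, hB₁, hB₂⟩ := hHdec
  have := finrank_add_le_finrank_add_finrank A₁ A₂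
  have := h₁.mono A₁ (A₁ ⊔ A₂) le_sup_left
  have := h₂.mono A₂ (A₁ ⊔ A₂) le_sup_right
  exact ⟨A₁ ⊔ B₁, A₂ ⊔ B₂, by rw [← hTHJ, sup_sup_sup_comm],
    h₁.eq_finrank_sup_of_contract le_sup_left hA₁ (by omega) hB₁,
    h₂.eq_finrank_sup_of_contract le_sup_right hA₂ (by omega) hB₂⟩

theorem IsSumOfIndep.of_contract_left [FiniteDimensional K V] (h₁ : IsQMatroidRank r₁)
    {x H J : Submodule K V} (hx : r₁ x = finrank K x) (hxHJ : x ⊔ H = J)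
    (hHdec : IsSumOfIndep (contractRank r₁ x) r₂ H) : IsSumOfIndep r₁ r₂ J := by
  obtain ⟨B₁, B₂, rfl, hB₁, hB₂⟩ := hHdec
  exact ⟨x ⊔ B₁, B₂, by rw [sup_assoc, hxHJ],
    h₁.eq_finrank_sup_of_contract le_rfl hx rfl hB₁, hB₂⟩

theorem IsSumOfIndep.exists_inf_eq_bot [FiniteDimensional K V] (h₂ : IsQMatroidRank r₂)
    {J : Submodule K V} (h : IsSumOfIndep r₁ r₂ J) :
    ∃ I₁ I₂ : Submodule K V, I₁ ⊓ I₂ = ⊥ ∧ I₁ ⊔ I₂ = J ∧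
      r₁ I₁ = finrank K I₁ ∧ r₂ I₂ = finrank K I₂ := by
  obtain ⟨I₁, I₂, rfl, hI₁, hI₂⟩ := h
  obtain ⟨C, hC, hsup⟩ :=
    IsModularLattice.exists_disjoint_and_sup_eq (inf_le_right : I₁ ⊓ I₂ ≤ I₂)
  have hCI₂ : C ≤ I₂ := hsup ▸ le_sup_right
  refine ⟨I₁, C, ?_, ?_, hI₁, h₂.eq_finrank_of_le hI₂ hCI₂⟩
  · rw [← inf_eq_right.2 hCI₂, ← inf_assoc]
    exact hC.eq_bot
  · rw [← hsup, ← sup_assoc, sup_inf_self]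

theorem isSumOfIndep_of_forall_finrank_le [FiniteDimensional K V] (h₁ : IsQMatroidRank r₁)
    (h₂ : IsQMatroidRank r₂) {J : Submodule K V}
    (hJ : ∀ X ≤ J, (finrank K X : ℤ) ≤ r₁ X + r₂ X) : IsSumOfIndep r₁ r₂ J := by
  induction hn : finrank K J using Nat.strong_induction_on generalizing r₁ r₂ J with
  | _ n ih =>
    subst hn
    by_cases htight : ∃ T ≤ J, T ≠ ⊥ ∧ T ≠ J ∧ r₁ T + r₂ T ≤ finrank K T
    · obtain ⟨T, hTJ, hT0, hTJ', hT⟩ := htight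
      replace hT := le_antisymm hT (hJ T hTJ)
      obtain ⟨H, hHJ, hTH, hTHJ⟩ := exists_lt_disjoint_and_sup_eq hT0 hTJ
      have hTdec := ih _ (finrank_lt_finrank_of_lt (hTJ.lt_of_ne hTJ')) h₁ h₂
        (fun X hX => hJ X (hX.trans hTJ)) rfl
      have hHdec := ih _ (finrank_lt_finrank_of_lt hHJ) (h₁.contract T) (h₂.contract T)
        (finrank_le_contract_of_tight hJ hT hTH hTHJ) rfl
      exact .of_tight h₁ h₂ hT hTdec hTHJ hHdec
    push Not at htight
    obtain hr₁J | hr₁J := (h₁.nonneg J).eq_or_lt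
    · exact ⟨⊥, J, bot_sup_eq J, by simp [h₁.map_bot],
        le_antisymm (h₂.le_finrank J) (by linarith [hJ J le_rfl])⟩
    obtain ⟨v, hvJ, hv0, hv⟩ := h₁.exists_rank_span_singleton_eq_one hr₁J
    obtain ⟨H, hHJ, -, hxHJ⟩ :=
      exists_lt_disjoint_and_sup_eq (span_singleton_eq_bot.not.2 hv0)
        ((span_singleton_le_iff_mem v J).2 hvJ)
    have hHdec := ih _ (finrank_lt_finrank_of_lt hHJ) (h₁.contract _) h₂
      (finrank_le_contract_left h₁ h₂ htight hv hHJ) rfl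
    exact .of_contract_left h₁ (by rw [hv, finrank_span_singleton hv0]; rfl) hxHJ hHdec

end QMatroid

theorem independent_in_union_iff_decomposition
    {K V : Type*} [Field K] [AddCommGroup V] [Module K V] [FiniteDimensional K V]
    (r1 r2 : Submodule K V → ℤ)
    (hR1₁ : ∀ A : Submodule K V, 0 ≤ r1 A ∧ r1 A ≤ (finrank K A : ℤ))
    (hR2₁ : ∀ A B : Submodule K V, A ≤ B → r1 A ≤ r1 B)
    (hR3₁ : ∀ A B : Submodule K V, r1 (A ⊔ B) + r1 (A ⊓ B) ≤ r1 A + r1 B)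
    (hR1₂ : ∀ A : Submodule K V, 0 ≤ r2 A ∧ r2 A ≤ (finrank K A : ℤ))
    (hR2₂ : ∀ A B : Submodule K V, A ≤ B → r2 A ≤ r2 B)
    (hR3₂ : ∀ A B : Submodule K V, r2 (A ⊔ B) + r2 (A ⊓ B) ≤ r2 A + r2 B)
    (r : Submodule K V → ℤ)
    (hr : ∀ A : Submodule K V, IsLeast
      {y : ℤ | ∃ X ≤ A, y = r1 X + r2 X + (finrank K A : ℤ) - (finrank K X : ℤ)} (r A))
    (I : Submodule K V) :
    r I = (finrank K I : ℤ) ↔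
      ∀ J ≤ I, ∃ I1 I2 : Submodule K V, I1 ⊓ I2 = ⊥ ∧ I1 ⊔ I2 = J ∧
        r1 I1 = (finrank K I1 : ℤ) ∧ r2 I2 = (finrank K I2 : ℤ) := by
  have h₁ : IsQMatroidRank r1 := ⟨fun A => (hR1₁ A).1, fun A => (hR1₁ A).2, hR2₁, hR3₁⟩
  have h₂ : IsQMatroidRank r2 := ⟨fun A => (hR1₂ A).1, fun A => (hR1₂ A).2, hR2₂, hR3₂⟩
  constructor
  · intro hI J hJI
    refine (isSumOfIndep_of_forall_finrank_le h₁ h₂ fun X hXJ => ?_).exists_inf_eq_bot h₂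
    have := (hr I).2 ⟨X, hXJ.trans hJI, rfl⟩
    omega
  · intro hdec
    obtain ⟨X, hXI, hX⟩ := (hr I).1
    obtain ⟨I₁, I₂, -, rfl, hI₁, hI₂⟩ := hdec X hXI
    have : r I ≤ finrank K I := (hr I).2 ⟨⊥, bot_le, by simp [h₁.map_bot, h₂.map_bot]⟩
    have := finrank_add_le_finrank_add_finrank I₁ I₂
    have := hR2₁ I₁ (I₁ ⊔ I₂) le_sup_left
    have := hR2₂ I₂ (I₁ ⊔ I₂) le_sup_right
    omega
end

section
/- Let $M=(E,r)$ be a $q$-matroid, $\ell$ a $1$-dimensional space not in $E$, and $E' = E \oplus \ell$. Define $r'(A') = r(A)$ where $A \subseteq E$ is the unique subspace with $A' + \ell = A \oplus \ell$ (i.e., $A = (A'+\ell) \cap E$). Then $(E', r')$ is a $q$-matroid, i.e., $r'$ satisfies (R1), (R2), (R3). -/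
/-!
`r'` is `r` composed with the projection `A' ↦ (A' ⊔ L) ⊓ E` onto `E` along `L`. Since `E` and `L`
are complements in a modular lattice, this projection is monotone, preserves joins, and does not
increase dimension, so (R1)–(R3) for `r'` follow from those for `r`; for (R3) one uses in addition
that the projection of a meet lies below the meet of the projections.
-/

open Module Submodule

section ModularLattice

variable {α : Type*} [Lattice α]

theorem monotone_sup_inf (L E : α) : Monotone fun x => (x ⊔ L) ⊓ E :=
  fun _ _ h => inf_le_inf_right E (sup_le_sup_right h L)

variable [IsModularLattice α] {E L : α}

theorem sup_inf_sup_eq_sup [OrderTop α] (hsup : E ⊔ L = ⊤) (x : α) :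
    (x ⊔ L) ⊓ E ⊔ L = x ⊔ L := by
  rw [inf_sup_assoc_of_le E le_sup_right, hsup, inf_top_eq]

theorem sup_inf_eq_self_of_le [OrderBot α] (hdisj : E ⊓ L = ⊥) {a : α} (ha : a ≤ E) :
    (a ⊔ L) ⊓ E = a := by
  rw [sup_inf_assoc_of_le L ha, inf_comm, hdisj, sup_bot_eq]

theorem sup_sup_inf_eq [BoundedOrder α] (hdisj : E ⊓ L = ⊥) (hsup : E ⊔ L = ⊤) (x y : α) :
    (x ⊔ y ⊔ L) ⊓ E = (x ⊔ L) ⊓ E ⊔ (y ⊔ L) ⊓ E := by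
  calc (x ⊔ y ⊔ L) ⊓ E = ((x ⊔ L) ⊓ E ⊔ (y ⊔ L) ⊓ E ⊔ L) ⊓ E := by
        rw [sup_sup_distrib_right ((x ⊔ L) ⊓ E), sup_inf_sup_eq_sup hsup,
          sup_inf_sup_eq_sup hsup, ← sup_sup_distrib_right]
    _ = (x ⊔ L) ⊓ E ⊔ (y ⊔ L) ⊓ E :=
        sup_inf_eq_self_of_le hdisj (sup_le inf_le_right inf_le_right)

end ModularLattice

theorem finrank_sup_inf_le {K V : Type*} [Field K] [AddCommGroup V] [Module K V]
    [FiniteDimensional K V] {E L : Submodule K V} (hdisj : E ⊓ L = ⊥) (hsup : E ⊔ L = ⊤)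
    (A : Submodule K V) : finrank K ↥((A ⊔ L) ⊓ E) ≤ finrank K A := by
  have hbot : (A ⊔ L) ⊓ E ⊓ L = ⊥ := eq_bot_iff.2 (hdisj ▸ inf_le_inf_right L inf_le_right)
  have hdim := finrank_sup_add_finrank_inf_eq ((A ⊔ L) ⊓ E) L
  rw [sup_inf_sup_eq_sup hsup, hbot, finrank_bot, add_zero] at hdim
  have := finrank_add_le_finrank_add_finrank A L
  omega

theorem add_loop_is_qmatroid_general
    {K V : Type*} [Field K] [AddCommGroup V] [Module K V] [FiniteDimensional K V]
    (E L : Submodule K V) (hdisj : E ⊓ L = ⊥) (hsup : E ⊔ L = ⊤)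
    (r : Submodule K V → ℤ)
    (hR1 : ∀ A ≤ E, 0 ≤ r A ∧ r A ≤ (finrank K A : ℤ))
    (hR2 : ∀ A B : Submodule K V, A ≤ E → B ≤ E → A ≤ B → r A ≤ r B)
    (hR3 : ∀ A B : Submodule K V, A ≤ E → B ≤ E →
      r (A ⊔ B) + r (A ⊓ B) ≤ r A + r B)
    (r' : Submodule K V → ℤ)
    (hr' : ∀ A' : Submodule K V, r' A' = r ((A' ⊔ L) ⊓ E)) :
    (∀ A' : Submodule K V, 0 ≤ r' A' ∧ r' A' ≤ (finrank K A' : ℤ)) ∧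
    (∀ A' B' : Submodule K V, A' ≤ B' → r' A' ≤ r' B') ∧
    (∀ A' B' : Submodule K V, r' (A' ⊔ B') + r' (A' ⊓ B') ≤ r' A' + r' B') := by
  refine ⟨fun A' => ?_, fun A' B' h => ?_, fun A' B' => ?_⟩
  · obtain ⟨hnonneg, hle⟩ := hR1 _ (inf_le_right : (A' ⊔ L) ⊓ E ≤ E)
    rw [hr']
    exact ⟨hnonneg, hle.trans (by exact_mod_cast finrank_sup_inf_le hdisj hsup A')⟩
  · simp only [hr']
    exact hR2 _ _ inf_le_right inf_le_right (monotone_sup_inf L E h)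
  · simp only [hr']
    rw [sup_sup_inf_eq hdisj hsup]
    have hinf := hR2 _ _ inf_le_right (inf_le_of_left_le inf_le_right)
      ((monotone_sup_inf L E).map_inf_le A' B')
    have hsub := hR3 _ _ (inf_le_right : (A' ⊔ L) ⊓ E ≤ E) (inf_le_right : (B' ⊔ L) ⊓ E ≤ E)
    omega

theorem add_loop_is_qmatroid
    {K V : Type*} [Field K] [AddCommGroup V] [Module K V] [FiniteDimensional K V]
    (E L : Submodule K V) (hdisj : E ⊓ L = ⊥) (hsup : E ⊔ L = ⊤)
    (hL : finrank K L = 1)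
    (r : Submodule K V → ℤ)
    (hR1 : ∀ A ≤ E, 0 ≤ r A ∧ r A ≤ (finrank K A : ℤ))
    (hR2 : ∀ A B : Submodule K V, A ≤ E → B ≤ E → A ≤ B → r A ≤ r B)
    (hR3 : ∀ A B : Submodule K V, A ≤ E → B ≤ E →
      r (A ⊔ B) + r (A ⊓ B) ≤ r A + r B)
    (r' : Submodule K V → ℤ)
    (hr' : ∀ A' : Submodule K V, r' A' = r ((A' ⊔ L) ⊓ E)) :
    (∀ A' : Submodule K V, 0 ≤ r' A' ∧ r' A' ≤ (finrank K A' : ℤ)) ∧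
    (∀ A' B' : Submodule K V, A' ≤ B' → r' A' ≤ r' B') ∧
    (∀ A' B' : Submodule K V, r' (A' ⊔ B') + r' (A' ⊓ B') ≤ r' A' + r' B') :=
  add_loop_is_qmatroid_general E L hdisj hsup r hR1 hR2 hR3 r' hr'
end

section
/- Let $M_1=(E_1,r_1)$ and $M_2=(E_2,r_2)$ be $q$-matroids, and let $M_1', M_2'$ be their loop-extensions to $E = E_1 \oplus E_2$, i.e., $r(M_1';X) = r_1((X+E_2)\cap E_1)$ and $r(M_2';X) = r_2((X+E_1)\cap E_2)$. Then the direct sum $M = M_1' \vee M_2'$ satisfies $r(M; E) = r_1(E_1) + r_2(E_2)$. -/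
/-!
Submodularity together with `r C ≤ dim C` and `r ⊥ ≥ 0`, applied to a complement `C` of `A`
inside `E`, shows that a q-matroid rank grows at most as fast as dimension:
`r E ≤ r A + dim E - dim A`. Taking `X = ⊤` shows `r₁ E₁ + r₂ E₂` is attained. For a general `X`,
its projections `A = (X + E₂) ∩ E₁` and `B = (X + E₁) ∩ E₂` satisfy `dim X ≤ dim A + dim B`,
since the kernels `X ∩ E₂` and `X ∩ E₁` of the projections meet trivially inside `X`; with
`dim E₁ + dim E₂ = dim V` this gives `r₁ E₁ + r₂ E₂ ≤ r₁ A + r₂ B + dim V - dim X`.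
-/

open Module Submodule

section

variable {K V : Type*} [Field K] [AddCommGroup V] [Module K V] [FiniteDimensional K V]

theorem rank_le_rank_add_finrank_sub_finrank {E A : Submodule K V} (r : Submodule K V → ℤ)
    (hR1 : ∀ A ≤ E, 0 ≤ r A ∧ r A ≤ (finrank K A : ℤ))
    (hR3 : ∀ A B : Submodule K V, A ≤ E → B ≤ E → r (A ⊔ B) + r (A ⊓ B) ≤ r A + r B)
    (hA : A ≤ E) :
    r E ≤ r A + finrank K E - finrank K A := by
  obtain ⟨C, hdisj, hsup⟩ := IsModularLattice.exists_disjoint_and_sup_eq hA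
  have hCE : C ≤ E := hsup ▸ le_sup_right
  have hsub := hR3 A C hA hCE
  rw [hsup, hdisj.eq_bot] at hsub
  have hdim := finrank_sup_add_finrank_inf_eq A C
  rw [hsup, hdisj.eq_bot, finrank_bot] at hdim
  have hbot := (hR1 ⊥ bot_le).1
  have hC := (hR1 C hCE).2
  omega

theorem finrank_inf_add_finrank_inf_le_s15 {E₁ E₂ : Submodule K V} (h : Disjoint E₁ E₂)
    (X : Submodule K V) :
    finrank K ↥(X ⊓ E₁) + finrank K ↥(X ⊓ E₂) ≤ finrank K X := by
  have hdisj : X ⊓ E₁ ⊓ (X ⊓ E₂) = ⊥ :=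
    (h.mono inf_le_right inf_le_right).eq_bot
  have hdim := finrank_sup_add_finrank_inf_eq (X ⊓ E₁) (X ⊓ E₂)
  rw [hdisj, finrank_bot, add_zero] at hdim
  exact hdim ▸ finrank_mono (sup_le inf_le_left inf_le_left)

/-- `(X ⊔ E₂) ⊓ E₁` is the projection of `X` onto `E₁` along `E₂`, whose kernel is `X ⊓ E₂`. -/
theorem finrank_sup_inf_add_finrank_inf_of_isCompl {E₁ E₂ : Submodule K V} (h : IsCompl E₁ E₂)
    (X : Submodule K V) :
    finrank K ↥((X ⊔ E₂) ⊓ E₁) + finrank K ↥(X ⊓ E₂) = finrank K X := by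
  have hproj := finrank_sup_add_finrank_inf_eq (X ⊔ E₂) E₁
  rw [sup_assoc, sup_comm E₂, h.sup_eq_top, sup_top_eq, finrank_top] at hproj
  have hX := finrank_sup_add_finrank_inf_eq X E₂
  have hE := finrank_add_eq_of_isCompl h
  omega

theorem finrank_le_finrank_sup_inf_add_finrank_sup_inf {E₁ E₂ : Submodule K V}
    (h : IsCompl E₁ E₂) (X : Submodule K V) :
    finrank K X ≤ finrank K ↥((X ⊔ E₂) ⊓ E₁) + finrank K ↥((X ⊔ E₁) ⊓ E₂) := by
  have h₁ := finrank_sup_inf_add_finrank_inf_of_isCompl h X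
  have h₂ := finrank_sup_inf_add_finrank_inf_of_isCompl h.symm X
  have hker := finrank_inf_add_finrank_inf_le_s15 h.disjoint X
  omega

end

theorem rank_of_direct_sum_general
    {K V : Type*} [Field K] [AddCommGroup V] [Module K V] [FiniteDimensional K V]
    (E1 E2 : Submodule K V) (hdisj : E1 ⊓ E2 = ⊥) (hsup : E1 ⊔ E2 = ⊤)
    (r1 r2 : Submodule K V → ℤ)
    (hR1₁ : ∀ A ≤ E1, 0 ≤ r1 A ∧ r1 A ≤ (finrank K A : ℤ))
    (hR3₁ : ∀ A B : Submodule K V, A ≤ E1 → B ≤ E1 →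
      r1 (A ⊔ B) + r1 (A ⊓ B) ≤ r1 A + r1 B)
    (hR1₂ : ∀ A ≤ E2, 0 ≤ r2 A ∧ r2 A ≤ (finrank K A : ℤ))
    (hR3₂ : ∀ A B : Submodule K V, A ≤ E2 → B ≤ E2 →
      r2 (A ⊔ B) + r2 (A ⊓ B) ≤ r2 A + r2 B) :
    IsLeast {y : ℤ | ∃ X : Submodule K V,
        y = r1 ((X ⊔ E2) ⊓ E1) + r2 ((X ⊔ E1) ⊓ E2)
          + (finrank K V : ℤ) - (finrank K X : ℤ)}
      (r1 E1 + r2 E2) := by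
  have hcompl : IsCompl E1 E2 := ⟨disjoint_iff.mpr hdisj, codisjoint_iff.mpr hsup⟩
  refine ⟨⟨⊤, by simp⟩, ?_⟩
  rintro _ ⟨X, rfl⟩
  have h₁ := rank_le_rank_add_finrank_sub_finrank r1 hR1₁ hR3₁ (inf_le_right : (X ⊔ E2) ⊓ E1 ≤ E1)
  have h₂ := rank_le_rank_add_finrank_sub_finrank r2 hR1₂ hR3₂ (inf_le_right : (X ⊔ E1) ⊓ E2 ≤ E2)
  have hE : (finrank K E1 + finrank K E2 : ℤ) = finrank K V := by
    exact_mod_cast finrank_add_eq_of_isCompl hcompl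
  have hX : (finrank K X : ℤ) ≤ finrank K ↥((X ⊔ E2) ⊓ E1) + finrank K ↥((X ⊔ E1) ⊓ E2) := by
    exact_mod_cast finrank_le_finrank_sup_inf_add_finrank_sup_inf hcompl X
  linarith

theorem rank_of_direct_sum
    {K V : Type*} [Field K] [AddCommGroup V] [Module K V] [FiniteDimensional K V]
    (E1 E2 : Submodule K V) (hdisj : E1 ⊓ E2 = ⊥) (hsup : E1 ⊔ E2 = ⊤)
    (r1 r2 : Submodule K V → ℤ)
    (hR1₁ : ∀ A ≤ E1, 0 ≤ r1 A ∧ r1 A ≤ (finrank K A : ℤ))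
    (hR2₁ : ∀ A B : Submodule K V, A ≤ E1 → B ≤ E1 → A ≤ B → r1 A ≤ r1 B)
    (hR3₁ : ∀ A B : Submodule K V, A ≤ E1 → B ≤ E1 →
      r1 (A ⊔ B) + r1 (A ⊓ B) ≤ r1 A + r1 B)
    (hR1₂ : ∀ A ≤ E2, 0 ≤ r2 A ∧ r2 A ≤ (finrank K A : ℤ))
    (hR2₂ : ∀ A B : Submodule K V, A ≤ E2 → B ≤ E2 → A ≤ B → r2 A ≤ r2 B)
    (hR3₂ : ∀ A B : Submodule K V, A ≤ E2 → B ≤ E2 →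
      r2 (A ⊔ B) + r2 (A ⊓ B) ≤ r2 A + r2 B) :
    IsLeast {y : ℤ | ∃ X : Submodule K V,
        y = r1 ((X ⊔ E2) ⊓ E1) + r2 ((X ⊔ E1) ⊓ E2)
          + (finrank K V : ℤ) - (finrank K X : ℤ)}
      (r1 E1 + r2 E2) :=
  rank_of_direct_sum_general E1 E2 hdisj hsup r1 r2 hR1₁ hR3₁ hR1₂ hR3₂
end

section
/- Let $M_1=(E_1,r_1)$ and $M_2=(E_2,r_2)$ be $q$-matroids with $E = E_1 \oplus E_2$, and let $M = M_1 \oplus M_2$ be the direct sum defined via matroid union of loop-extensions. Then for any subspace $A = A_1 \oplus A_2$ with $A_1 \subseteq E_1$ and $A_2 \subseteq E_2$, one has $r(M; A) = r_1(A_1) + r_2(A_2)$. -/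
/-!
For `X = A` the projections `X₁ = (X + E₂) ∩ E₁` and `X₂ = (X + E₁) ∩ E₂` are `A₁` and `A₂`, so
the value `r₁(A₁) + r₂(A₂)` is attained. For any `X ≤ A` we have `Xᵢ ≤ Aᵢ` and `X ≤ X₁ + X₂`, so
`dim X ≤ dim X₁ + dim X₂`, while by (R1) and submodularity a rank function grows by at most one
per dimension: `rᵢ(Aᵢ) ≤ rᵢ(Xᵢ) + dim Aᵢ - dim Xᵢ`.
-/

open Module Submodule

section ModularLattice

variable {α : Type*} [Lattice α] [IsModularLattice α]

theorem le_sup_inf_sup_inf_sup {a b x : α} (hx : x ≤ a ⊔ b) :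
    x ≤ (x ⊔ b) ⊓ a ⊔ (x ⊔ a) ⊓ b := by
  have hb : (x ⊔ b) ⊓ a ⊔ b = x ⊔ b := by
    rw [inf_sup_assoc_of_le _ le_sup_right, inf_eq_left.mpr (sup_le hx le_sup_right)]
  rw [inf_comm (x ⊔ a), ← sup_inf_assoc_of_le _ (inf_le_right.trans le_sup_right), hb]
  exact le_inf le_sup_left le_sup_left

theorem sup_sup_inf_eq_of_disjoint [OrderBot α] {a b e f : α} (ha : a ≤ e) (hb : b ≤ f)
    (hef : Disjoint e f) : (a ⊔ b ⊔ f) ⊓ e = a := by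
  rw [sup_assoc, sup_eq_right.mpr hb, sup_inf_assoc_of_le _ ha, hef.symm.eq_bot, sup_bot_eq]

end ModularLattice

section RankFunction

variable {K V : Type*} [Field K] [AddCommGroup V] [Module K V]

theorem Submodule.finrank_sup_of_disjoint [FiniteDimensional K V] {A B : Submodule K V}
    (h : Disjoint A B) :
    finrank K ↥(A ⊔ B) = finrank K A + finrank K B := by
  rw [← finrank_sup_add_finrank_inf_eq, h.eq_bot, finrank_bot, add_zero]

theorem rank_sup_le_add_finrank {E : Submodule K V} {r : Submodule K V → ℤ}
    (hR1 : ∀ A ≤ E, 0 ≤ r A ∧ r A ≤ (finrank K A : ℤ))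
    (hR3 : ∀ A B : Submodule K V, A ≤ E → B ≤ E → r (A ⊔ B) + r (A ⊓ B) ≤ r A + r B)
    {A W : Submodule K V} (hA : A ≤ E) (hW : W ≤ E) :
    r (A ⊔ W) ≤ r A + finrank K W := by
  have hsub := hR3 A W hA hW
  have hinf := (hR1 (A ⊓ W) (inf_le_left.trans hA)).1
  have hWrank := (hR1 W hW).2
  linarith

theorem rank_le_add_finrank_sub [FiniteDimensional K V] {E : Submodule K V} {r : Submodule K V → ℤ}
    (hR1 : ∀ A ≤ E, 0 ≤ r A ∧ r A ≤ (finrank K A : ℤ))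
    (hR3 : ∀ A B : Submodule K V, A ≤ E → B ≤ E → r (A ⊔ B) + r (A ⊓ B) ≤ r A + r B)
    {A B : Submodule K V} (hB : B ≤ E) (hAB : A ≤ B) :
    r B ≤ r A + ((finrank K B : ℤ) - finrank K A) := by
  obtain ⟨W, hAW, rfl⟩ := IsModularLattice.exists_disjoint_and_sup_eq hAB
  have hrank := rank_sup_le_add_finrank hR1 hR3 (hAB.trans hB) (le_sup_right.trans hB)
  rw [finrank_sup_of_disjoint hAW]
  push_cast
  linarith

end RankFunction

theorem direct_sum_rank_on_split_subspaces_general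
    {K V : Type*} [Field K] [AddCommGroup V] [Module K V] [FiniteDimensional K V]
    (E1 E2 : Submodule K V) (hdisj : E1 ⊓ E2 = ⊥) (hsup : E1 ⊔ E2 = ⊤)
    (r1 r2 : Submodule K V → ℤ)
    (hR1₁ : ∀ A ≤ E1, 0 ≤ r1 A ∧ r1 A ≤ (finrank K A : ℤ))
    (hR3₁ : ∀ A B : Submodule K V, A ≤ E1 → B ≤ E1 →
      r1 (A ⊔ B) + r1 (A ⊓ B) ≤ r1 A + r1 B)
    (hR1₂ : ∀ A ≤ E2, 0 ≤ r2 A ∧ r2 A ≤ (finrank K A : ℤ))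
    (hR3₂ : ∀ A B : Submodule K V, A ≤ E2 → B ≤ E2 →
      r2 (A ⊔ B) + r2 (A ⊓ B) ≤ r2 A + r2 B)
    (A1 A2 : Submodule K V) (hA1 : A1 ≤ E1) (hA2 : A2 ≤ E2) :
    IsLeast {y : ℤ | ∃ X ≤ A1 ⊔ A2,
        y = r1 ((X ⊔ E2) ⊓ E1) + r2 ((X ⊔ E1) ⊓ E2)
          + (finrank K ↥(A1 ⊔ A2) : ℤ) - (finrank K X : ℤ)}
      (r1 A1 + r2 A2) := by
  have hE : Disjoint E1 E2 := disjoint_iff.mpr hdisj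
  have hproj₁ : (A1 ⊔ A2 ⊔ E2) ⊓ E1 = A1 := sup_sup_inf_eq_of_disjoint hA1 hA2 hE
  have hproj₂ : (A1 ⊔ A2 ⊔ E1) ⊓ E2 = A2 := by
    rw [sup_comm A1]
    exact sup_sup_inf_eq_of_disjoint hA2 hA1 hE.symm
  refine ⟨⟨A1 ⊔ A2, le_rfl, by rw [hproj₁, hproj₂]; ring⟩, ?_⟩
  rintro y ⟨X, hX, rfl⟩
  have hX₁ : (X ⊔ E2) ⊓ E1 ≤ A1 := hproj₁ ▸ inf_le_inf_right _ (sup_le_sup_right hX _)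
  have hX₂ : (X ⊔ E1) ⊓ E2 ≤ A2 := hproj₂ ▸ inf_le_inf_right _ (sup_le_sup_right hX _)
  have hdimX : finrank K X ≤ finrank K ↥((X ⊔ E2) ⊓ E1) + finrank K ↥((X ⊔ E1) ⊓ E2) :=
    (finrank_mono (le_sup_inf_sup_inf_sup (hsup ▸ le_top))).trans
      (finrank_add_le_finrank_add_finrank _ _)
  have hr₁ := rank_le_add_finrank_sub hR1₁ hR3₁ hA1 hX₁
  have hr₂ := rank_le_add_finrank_sub hR1₂ hR3₂ hA2 hX₂
  rw [finrank_sup_of_disjoint (hE.mono hA1 hA2)]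
  push_cast
  omega

theorem direct_sum_rank_on_split_subspaces
    {K V : Type*} [Field K] [AddCommGroup V] [Module K V] [FiniteDimensional K V]
    (E1 E2 : Submodule K V) (hdisj : E1 ⊓ E2 = ⊥) (hsup : E1 ⊔ E2 = ⊤)
    (r1 r2 : Submodule K V → ℤ)
    (hR1₁ : ∀ A ≤ E1, 0 ≤ r1 A ∧ r1 A ≤ (finrank K A : ℤ))
    (hR2₁ : ∀ A B : Submodule K V, A ≤ E1 → B ≤ E1 → A ≤ B → r1 A ≤ r1 B)
    (hR3₁ : ∀ A B : Submodule K V, A ≤ E1 → B ≤ E1 →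
      r1 (A ⊔ B) + r1 (A ⊓ B) ≤ r1 A + r1 B)
    (hR1₂ : ∀ A ≤ E2, 0 ≤ r2 A ∧ r2 A ≤ (finrank K A : ℤ))
    (hR2₂ : ∀ A B : Submodule K V, A ≤ E2 → B ≤ E2 → A ≤ B → r2 A ≤ r2 B)
    (hR3₂ : ∀ A B : Submodule K V, A ≤ E2 → B ≤ E2 →
      r2 (A ⊔ B) + r2 (A ⊓ B) ≤ r2 A + r2 B)
    (A1 A2 : Submodule K V) (hA1 : A1 ≤ E1) (hA2 : A2 ≤ E2) :
    IsLeast {y : ℤ | ∃ X ≤ A1 ⊔ A2,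
        y = r1 ((X ⊔ E2) ⊓ E1) + r2 ((X ⊔ E1) ⊓ E2)
          + (finrank K ↥(A1 ⊔ A2) : ℤ) - (finrank K X : ℤ)}
      (r1 A1 + r2 A2) :=
  direct_sum_rank_on_split_subspaces_general E1 E2 hdisj hsup r1 r2 hR1₁ hR3₁ hR1₂ hR3₂ A1 A2 hA1
    hA2
end

section
/- Let $M_1, M_2$ be $q$-matroids on the same ground space $E$ with a fixed involutive anti-isomorphism $\perp$. Define the matroid intersection $M_1 \wedge M_2 := (M_1^* \vee M_2^*)^*$. Then for any subspace $T \subseteq E$: $(M_1 \vee M_2)|_T = M_1|_T \vee M_2|_T$, and $(M_1 \wedge M_2)/T \cong (M_1/T) \wedge (M_2/T)$. -/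
open Module Submodule

/-!
Everything reduces to reindexing minimisations. The union rank of `M₁* ∨ M₂*` at `perp A`
is a minimum over `X ≤ perp A`; substituting `Y = perp X` turns it into a minimum over
`Y ≥ A`. When `A` contains `T`, the subspaces `Y ≥ A` correspond, via `comap T.mkQ`, to
the subspaces of `E/T` above `A/T`, and the quantity minimised is the same expression in
`dim Y`, `r₁ Y`, `r₂ Y` on both sides. Hence `(M₁ ∧ M₂)/T` and `(M₁/T) ∧ (M₂/T)` have the
same rank function, and the identity serves as the isomorphism. Restriction needs no
argument: the union rank at `A ≤ T` only involves subspaces of `A`.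
-/

section InvolutiveAntitone

variable {α : Type*}

def OrderIso.ofInvolutiveAntitone [Preorder α] (f : α → α) (hinv : Function.Involutive f)
    (hanti : Antitone f) : α ≃o αᵒᵈ where
  toFun a := OrderDual.toDual (f a)
  invFun a := f (OrderDual.ofDual a)
  left_inv := hinv
  right_inv a := hinv (OrderDual.ofDual a)
  map_rel_iff' {a b} := ⟨fun h => hinv a ▸ hinv b ▸ hanti h, fun h => hanti h⟩

theorem Function.Involutive.apply_bot_of_antitone [PartialOrder α] [BoundedOrder α]
    {f : α → α} (hinv : Function.Involutive f) (hanti : Antitone f) : f ⊥ = ⊤ :=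
  (OrderIso.ofInvolutiveAntitone f hinv hanti).map_bot

theorem Function.Involutive.exists_le_apply_iff_of_antitone [Preorder α] {f : α → α}
    (hinv : Function.Involutive f) (hanti : Antitone f) {P : α → Prop} {a : α} :
    (∃ x ≤ f a, P x) ↔ ∃ y, a ≤ y ∧ P (f y) :=
  ⟨fun ⟨x, hx, h⟩ => ⟨f x, hinv a ▸ hanti hx, (hinv x).symm ▸ h⟩,
    fun ⟨y, hy, h⟩ => ⟨f y, hanti hy, h⟩⟩

end InvolutiveAntitone

namespace Submodule

variable {K V : Type*} [DivisionRing K] [AddCommGroup V] [Module K V]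

theorem finrank_add_finrank_of_involutive_antitone [FiniteDimensional K V]
    {f : Submodule K V → Submodule K V} (hinv : Function.Involutive f) (hanti : Antitone f)
    (A : Submodule K V) : finrank K (f A) + finrank K A = finrank K V := by
  -- dimension is height in the lattice of subspaces, codimension is coheight,
  -- and an anti-isomorphism exchanges the two
  have h : Order.coheight (f A) = Order.height A :=
    Order.height_orderIso (OrderIso.ofInvolutiveAntitone f hinv hanti) A
  rw [← Module.length_quotient, ← Module.length_submodule, Module.length_eq_finrank,
    Module.length_eq_finrank, Nat.cast_inj] at h
  rw [← h, add_comm, (f A).finrank_quotient_add_finrank]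

theorem finrank_comap_mkQ [FiniteDimensional K V] (T : Submodule K V)
    (B : Submodule K (V ⧸ T)) :
    finrank K (comap T.mkQ B) = finrank K B + finrank K T := by
  have hmap : map T.mkQ (comap T.mkQ B) = B := map_comap_eq_of_surjective T.mkQ_surjective B
  have hquot : finrank K ((V ⧸ T) ⧸ B) = finrank K (V ⧸ comap T.mkQ B) :=
    (hmap ▸ quotientQuotientEquivQuotient T _ (le_comap_mkQ T B)).finrank_eq
  have h₁ := (comap T.mkQ B).finrank_quotient_add_finrank
  have h₂ := B.finrank_quotient_add_finrank
  have h₃ := T.finrank_quotient_add_finrank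
  omega

theorem exists_le_comap_mkQ_iff (T : Submodule K V) (B : Submodule K (V ⧸ T))
    {P : Submodule K V → Prop} :
    (∃ Y, B ≤ Y ∧ P (comap T.mkQ Y)) ↔ ∃ Y, comap T.mkQ B ≤ Y ∧ P Y := by
  refine ⟨fun ⟨Y, hY, h⟩ => ⟨_, comap_mono hY, h⟩, fun ⟨Y, hY, h⟩ => ⟨map T.mkQ Y, ?_, ?_⟩⟩
  · exact (map_comap_eq_of_surjective T.mkQ_surjective B).ge.trans (map_mono hY)
  · rwa [comap_map_mkQ, sup_eq_right.mpr ((le_comap_mkQ T B).trans hY)]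

end Submodule

theorem union_dual_rank_perp_comap_mkQ_eq {K V : Type*} [DivisionRing K] [AddCommGroup V]
    [Module K V] [FiniteDimensional K V] (T : Submodule K V)
    {perp : Submodule K V → Submodule K V} (hperp_inv : Function.Involutive perp)
    (hperp_anti : Antitone perp)
    {perpQ : Submodule K (V ⧸ T) → Submodule K (V ⧸ T)} (hperpQ_inv : Function.Involutive perpQ)
    (hperpQ_anti : Antitone perpQ)
    (r1 r2 : Submodule K V → ℤ) (B : Submodule K (V ⧸ T)) {a b : ℤ}
    (ha : IsLeast {y : ℤ | ∃ X ≤ perp (comap T.mkQ B),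
        y = ((finrank K X : ℤ) - r1 ⊤ + r1 (perp X))
          + ((finrank K X : ℤ) - r2 ⊤ + r2 (perp X))
          + (finrank K (perp (comap T.mkQ B)) : ℤ) - (finrank K X : ℤ)} a)
    (hb : IsLeast {y : ℤ | ∃ X ≤ perpQ B,
        y = ((finrank K X : ℤ) - (r1 ⊤ - r1 T) + (r1 (comap T.mkQ (perpQ X)) - r1 T))
          + ((finrank K X : ℤ) - (r2 ⊤ - r2 T) + (r2 (comap T.mkQ (perpQ X)) - r2 T))
          + (finrank K (perpQ B) : ℤ) - (finrank K X : ℤ)} b) :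
    a = b := by
  refine ha.unique ((congrArg (IsLeast · b) (Set.ext fun y => ?_)).mp hb)
  simp only [Set.mem_ofPred_eq]
  rw [hperp_inv.exists_le_apply_iff_of_antitone hperp_anti,
    hperpQ_inv.exists_le_apply_iff_of_antitone hperpQ_anti, ← exists_le_comap_mkQ_iff]
  refine exists_congr fun Y => and_congr_right fun _ => ?_
  rw [hperp_inv, hperpQ_inv]
  have hdim := finrank_add_finrank_of_involutive_antitone hperp_inv hperp_anti
  have hdimQ := finrank_add_finrank_of_involutive_antitone hperpQ_inv hperpQ_anti
  have := hdim (comap T.mkQ B); have := hdim (comap T.mkQ Y)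
  have := hdimQ B; have := hdimQ Y
  have := finrank_comap_mkQ T B; have := finrank_comap_mkQ T Y
  have := T.finrank_quotient_add_finrank
  omega

theorem union_restriction_and_intersection_contraction_general
    {K V : Type*} [Field K] [AddCommGroup V] [Module K V] [FiniteDimensional K V]
    (T : Submodule K V)
    -- involutive anti-isomorphism on L(E)
    (perp : Submodule K V → Submodule K V)
    (hperp_inv : ∀ A : Submodule K V, perp (perp A) = A)
    (hperp_anti : ∀ A B : Submodule K V, A ≤ B → perp B ≤ perp A)
    -- involutive anti-isomorphism on L(E/T)
    (perpQ : Submodule K (V ⧸ T) → Submodule K (V ⧸ T))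
    (hperpQ_inv : ∀ B : Submodule K (V ⧸ T), perpQ (perpQ B) = B)
    (hperpQ_anti : ∀ B C : Submodule K (V ⧸ T), B ≤ C → perpQ C ≤ perpQ B)
    -- two q-matroids on E
    (r1 r2 : Submodule K V → ℤ)
    -- u = rank of the matroid union M1 ∨ M2
    (u : Submodule K V → ℤ)
    (hu : ∀ A : Submodule K V, IsLeast
      {y : ℤ | ∃ X ≤ A, y = r1 X + r2 X + (finrank K A : ℤ) - (finrank K X : ℤ)} (u A))
    -- ud = rank of the union of the duals M1* ∨ M2*;
    -- so M1 ∧ M2 = (M1* ∨ M2*)* has rank w A = dim A - ud ⊤ + ud (perp A)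
    (ud : Submodule K V → ℤ)
    (hud : ∀ A : Submodule K V, IsLeast
      {y : ℤ | ∃ X ≤ A,
        y = ((finrank K X : ℤ) - r1 ⊤ + r1 (perp X))
          + ((finrank K X : ℤ) - r2 ⊤ + r2 (perp X))
          + (finrank K A : ℤ) - (finrank K X : ℤ)} (ud A))
    -- uq = rank of the union (M1/T)* ∨ (M2/T)* on E/T, where Mi/T has rank
    -- ci B = ri (comap T.mkQ B) - ri T; so (M1/T) ∧ (M2/T) has rank
    -- wq B = dim B - uq ⊤ + uq (perpQ B)
    (uq : Submodule K (V ⧸ T) → ℤ)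
    (huq : ∀ B : Submodule K (V ⧸ T), IsLeast
      {y : ℤ | ∃ X ≤ B,
        y = ((finrank K X : ℤ) - (r1 ⊤ - r1 T) + (r1 (comap T.mkQ (perpQ X)) - r1 T))
          + ((finrank K X : ℤ) - (r2 ⊤ - r2 T) + (r2 (comap T.mkQ (perpQ X)) - r2 T))
          + (finrank K B : ℤ) - (finrank K X : ℤ)} (uq B)) :
    -- (M1 ∨ M2)|_T = M1|_T ∨ M2|_T
    ((∀ A ≤ T, IsLeast
      {y : ℤ | ∃ X ≤ A, y = r1 X + r2 X + (finrank K A : ℤ) - (finrank K X : ℤ)} (u A)) ∧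
    -- (M1 ∧ M2)/T ≅ (M1/T) ∧ (M2/T)
    (∃ φ : Submodule K (V ⧸ T) ≃o Submodule K (V ⧸ T),
      ∀ B : Submodule K (V ⧸ T),
        (((finrank K ↥(comap T.mkQ B) : ℤ) - ud ⊤ + ud (perp (comap T.mkQ B)))
          - ((finrank K T : ℤ) - ud ⊤ + ud (perp T)))
        = (finrank K ↥(φ B) : ℤ) - uq ⊤ + uq (perpQ (φ B)))) := by
  have key (B : Submodule K (V ⧸ T)) : ud (perp (comap T.mkQ B)) = uq (perpQ B) :=
    union_dual_rank_perp_comap_mkQ_eq T hperp_inv (fun A B => hperp_anti A B) hperpQ_inv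
      (fun B C => hperpQ_anti B C) r1 r2 B (hud _) (huq _)
  have key_bot : ud (perp T) = uq ⊤ := by
    have h := key ⊥
    rwa [comap_bot, ker_mkQ, Function.Involutive.apply_bot_of_antitone hperpQ_inv
      (fun B C => hperpQ_anti B C)] at h
  refine ⟨fun A _ => hu A, OrderIso.refl _, fun B => ?_⟩
  rw [OrderIso.refl_apply, key B, key_bot, finrank_comap_mkQ]
  push_cast
  ring

theorem union_restriction_and_intersection_contraction
    {K V : Type*} [Field K] [AddCommGroup V] [Module K V] [FiniteDimensional K V]
    (T : Submodule K V)
    -- involutive anti-isomorphism on L(E)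
    (perp : Submodule K V → Submodule K V)
    (hperp_inv : ∀ A : Submodule K V, perp (perp A) = A)
    (hperp_anti : ∀ A B : Submodule K V, A ≤ B → perp B ≤ perp A)
    -- involutive anti-isomorphism on L(E/T)
    (perpQ : Submodule K (V ⧸ T) → Submodule K (V ⧸ T))
    (hperpQ_inv : ∀ B : Submodule K (V ⧸ T), perpQ (perpQ B) = B)
    (hperpQ_anti : ∀ B C : Submodule K (V ⧸ T), B ≤ C → perpQ C ≤ perpQ B)
    -- two q-matroids on E
    (r1 r2 : Submodule K V → ℤ)
    (hR1₁ : ∀ A : Submodule K V, 0 ≤ r1 A ∧ r1 A ≤ (finrank K A : ℤ))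
    (hR2₁ : ∀ A B : Submodule K V, A ≤ B → r1 A ≤ r1 B)
    (hR3₁ : ∀ A B : Submodule K V, r1 (A ⊔ B) + r1 (A ⊓ B) ≤ r1 A + r1 B)
    (hR1₂ : ∀ A : Submodule K V, 0 ≤ r2 A ∧ r2 A ≤ (finrank K A : ℤ))
    (hR2₂ : ∀ A B : Submodule K V, A ≤ B → r2 A ≤ r2 B)
    (hR3₂ : ∀ A B : Submodule K V, r2 (A ⊔ B) + r2 (A ⊓ B) ≤ r2 A + r2 B)
    -- u = rank of the matroid union M1 ∨ M2
    (u : Submodule K V → ℤ)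
    (hu : ∀ A : Submodule K V, IsLeast
      {y : ℤ | ∃ X ≤ A, y = r1 X + r2 X + (finrank K A : ℤ) - (finrank K X : ℤ)} (u A))
    -- ud = rank of the union of the duals M1* ∨ M2*;
    -- so M1 ∧ M2 = (M1* ∨ M2*)* has rank w A = dim A - ud ⊤ + ud (perp A)
    (ud : Submodule K V → ℤ)
    (hud : ∀ A : Submodule K V, IsLeast
      {y : ℤ | ∃ X ≤ A,
        y = ((finrank K X : ℤ) - r1 ⊤ + r1 (perp X))
          + ((finrank K X : ℤ) - r2 ⊤ + r2 (perp X))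
          + (finrank K A : ℤ) - (finrank K X : ℤ)} (ud A))
    -- uq = rank of the union (M1/T)* ∨ (M2/T)* on E/T, where Mi/T has rank
    -- ci B = ri (comap T.mkQ B) - ri T; so (M1/T) ∧ (M2/T) has rank
    -- wq B = dim B - uq ⊤ + uq (perpQ B)
    (uq : Submodule K (V ⧸ T) → ℤ)
    (huq : ∀ B : Submodule K (V ⧸ T), IsLeast
      {y : ℤ | ∃ X ≤ B,
        y = ((finrank K X : ℤ) - (r1 ⊤ - r1 T) + (r1 (comap T.mkQ (perpQ X)) - r1 T))
          + ((finrank K X : ℤ) - (r2 ⊤ - r2 T) + (r2 (comap T.mkQ (perpQ X)) - r2 T))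
          + (finrank K B : ℤ) - (finrank K X : ℤ)} (uq B)) :
    -- (M1 ∨ M2)|_T = M1|_T ∨ M2|_T
    ((∀ A ≤ T, IsLeast
      {y : ℤ | ∃ X ≤ A, y = r1 X + r2 X + (finrank K A : ℤ) - (finrank K X : ℤ)} (u A)) ∧
    -- (M1 ∧ M2)/T ≅ (M1/T) ∧ (M2/T)
    (∃ φ : Submodule K (V ⧸ T) ≃o Submodule K (V ⧸ T),
      ∀ B : Submodule K (V ⧸ T),
        (((finrank K ↥(comap T.mkQ B) : ℤ) - ud ⊤ + ud (perp (comap T.mkQ B)))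
          - ((finrank K T : ℤ) - ud ⊤ + ud (perp T)))
        = (finrank K ↥(φ B) : ℤ) - uq ⊤ + uq (perpQ (φ B)))) :=
  union_restriction_and_intersection_contraction_general T perp hperp_inv hperp_anti perpQ
    hperpQ_inv hperpQ_anti r1 r2 u hu ud hud uq huq
end
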